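/- arXiv:2407.13073 — 6 statements merged into one kernel-verified Lean document; each statement's English description precedes it below -/
import Mathlib

section
/- Let A, E ∈ ℂ^{n×n}, B ∈ ℂ^{n×1}, C ∈ ℂ^{1×n}, let ω_1, …, ω_N ∈ ℝ, φ_1, …, φ_N ∈ ℝ, and η_1, …, η_r ∈ ℂ be such that each iω_i E − A and each η_j E − A is invertible and iω_i ≠ η_j for all i, j. Then for all 1 ≤ i ≤ N and 1 ≤ j ≤ r, the (i,j) entry of the matrix 𝕃 = L̃* E V_r ∈ ℂ^{N×r} satisfies 𝕃_{i,j} = −φ_i · (H(iω_i) − H(η_j)) / (iω_i − η_j). -/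
open Matrix

lemma resolvent_diff {n : ℕ} (A E : Matrix (Fin n) (Fin n) ℂ) (s₁ s₂ : ℂ)
    (h1 : IsUnit (s₁ • E - A).det) (h2 : IsUnit (s₂ • E - A).det) :
    (s₁ • E - A)⁻¹ - (s₂ • E - A)⁻¹ =
      (s₂ - s₁) • ((s₁ • E - A)⁻¹ * E * (s₂ • E - A)⁻¹) := by
  have key : (s₁ • E - A)⁻¹ * ((s₂ • E - A) - (s₁ • E - A)) * (s₂ • E - A)⁻¹ =
      (s₁ • E - A)⁻¹ - (s₂ • E - A)⁻¹ := by
    rw [Matrix.mul_sub, Matrix.sub_mul, Matrix.mul_assoc _ (s₂ • E - A),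
      Matrix.mul_nonsing_inv _ h2, Matrix.nonsing_inv_mul _ h1,
      Matrix.mul_one, Matrix.one_mul]
  have hE : (s₂ • E - A) - (s₁ • E - A) = (s₂ - s₁) • E := by
    rw [sub_smul]; abel
  rw [← key, hE]
  simp [Matrix.mul_smul, Matrix.smul_mul, Matrix.mul_assoc]

lemma entry_mul3 {m n p : ℕ} (P : Matrix (Fin m) (Fin n) ℂ)
    (M : Matrix (Fin n) (Fin n) ℂ) (Q : Matrix (Fin n) (Fin p) ℂ)
    (i : Fin m) (j : Fin p) :
    (P * M * Q) i j = ∑ y, ∑ x, P i x * M x y * Q y j := by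
  simp [Matrix.mul_apply, Finset.sum_mul]

/-- The entries of the data matrix `𝕃 = L̃* E V_r` are scaled divided
differences of the transfer function `H(s) = C (sE − A)⁻¹ B`:
`𝕃_{i,j} = −φ_i (H(iω_i) − H(η_j)) / (iω_i − η_j)`. -/
theorem stmt2 (n N r : ℕ)
    (A E : Matrix (Fin n) (Fin n) ℂ) (B : Matrix (Fin n) (Fin 1) ℂ)
    (C : Matrix (Fin 1) (Fin n) ℂ)
    (ω φ : Fin N → ℝ) (η : Fin r → ℂ)
    (hω : ∀ i, IsUnit ((Complex.I * (ω i : ℂ)) • E - A).det)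
    (hη : ∀ j, IsUnit (η j • E - A).det)
    (hne : ∀ i j, Complex.I * (ω i : ℂ) ≠ η j)
    (H : ℂ → ℂ) (hH : ∀ s, H s = (C * (s • E - A)⁻¹ * B) 0 0)
    (Lstar : Matrix (Fin N) (Fin n) ℂ)
    (hLstar : ∀ (k : Fin N) (x : Fin n), Lstar k x =
      (φ k : ℂ) * (C * ((Complex.I * (ω k : ℂ)) • E - A)⁻¹) 0 x)
    (V : Matrix (Fin n) (Fin r) ℂ)
    (hV : ∀ (x : Fin n) (j : Fin r), V x j = ((η j • E - A)⁻¹ * B) x 0)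
    (𝕃 : Matrix (Fin N) (Fin r) ℂ) (h𝕃 : 𝕃 = Lstar * E * V) :
    ∀ (i : Fin N) (j : Fin r),
      𝕃 i j = -(φ i : ℂ) * ((H (Complex.I * (ω i : ℂ)) - H (η j)) /
        (Complex.I * (ω i : ℂ) - η j)) := by
  intro i j
  have hne' : η j - Complex.I * (ω i : ℂ) ≠ 0 := sub_ne_zero.mpr (Ne.symm (hne i j))
  have step1 : 𝕃 i j = (φ i : ℂ) *
      ((C * ((Complex.I * (ω i : ℂ)) • E - A)⁻¹) * E * ((η j • E - A)⁻¹ * B)) 0 0 := by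
    rw [h𝕃, entry_mul3, entry_mul3, Finset.mul_sum]
    refine Finset.sum_congr rfl fun y _ => ?_
    rw [Finset.mul_sum]
    refine Finset.sum_congr rfl fun x _ => ?_
    rw [hLstar, hV]; ring
  have hres : ((Complex.I * (ω i : ℂ)) • E - A)⁻¹ * E * (η j • E - A)⁻¹ =
      (η j - Complex.I * (ω i : ℂ))⁻¹ •
        (((Complex.I * (ω i : ℂ)) • E - A)⁻¹ - (η j • E - A)⁻¹) := by
    rw [resolvent_diff A E _ _ (hω i) (hη j), smul_smul, inv_mul_cancel₀ hne', one_smul]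
  have hassoc : (C * ((Complex.I * (ω i : ℂ)) • E - A)⁻¹) * E * ((η j • E - A)⁻¹ * B)
      = C * (((Complex.I * (ω i : ℂ)) • E - A)⁻¹ * E * (η j • E - A)⁻¹) * B := by
    simp [Matrix.mul_assoc]
  rw [step1, hassoc, hres, Matrix.mul_smul, Matrix.smul_mul, Matrix.smul_apply,
    Matrix.mul_sub, Matrix.sub_mul, Matrix.sub_apply, ← hH, ← hH]
  have hne'' : Complex.I * (ω i : ℂ) - η j ≠ 0 := sub_ne_zero.mpr (hne i j)
  rw [smul_eq_mul]
  field_simp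
  ring
end

section
/- Let A, E ∈ ℂ^{n×n}, B ∈ ℂ^{n×1}, C ∈ ℂ^{1×n}, let ω_1, …, ω_N ∈ ℝ, φ_1, …, φ_N ∈ ℝ, and η_1, …, η_r ∈ ℂ be such that each iω_i E − A and each η_j E − A is invertible and iω_i ≠ η_j for all i, j. Then for all 1 ≤ i ≤ N and 1 ≤ j ≤ r, the (i,j) entry of the matrix 𝕄 = L̃* A V_r ∈ ℂ^{N×r} satisfies 𝕄_{i,j} = −φ_i · (iω_i H(iω_i) − η_j H(η_j)) / (iω_i − η_j). -/
open Matrix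

lemma key_resolvent {n : ℕ} (A E : Matrix (Fin n) (Fin n) ℂ) (s₁ s₂ : ℂ)
    (h₁ : IsUnit (s₁ • E - A).det) (h₂ : IsUnit (s₂ • E - A).det) :
    (s₁ - s₂) • ((s₁ • E - A)⁻¹ * A * (s₂ • E - A)⁻¹) =
      s₂ • (s₂ • E - A)⁻¹ - s₁ • (s₁ • E - A)⁻¹ := by
  set M₁ := s₁ • E - A with hM₁
  set M₂ := s₂ • E - A with hM₂
  have hA : (s₁ - s₂) • A = s₂ • M₁ - s₁ • M₂ := by
    rw [hM₁, hM₂]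
    module
  calc (s₁ - s₂) • (M₁⁻¹ * A * M₂⁻¹)
      = M₁⁻¹ * ((s₁ - s₂) • A) * M₂⁻¹ := by
        simp [Matrix.mul_smul, Matrix.smul_mul]
    _ = M₁⁻¹ * (s₂ • M₁ - s₁ • M₂) * M₂⁻¹ := by rw [hA]
    _ = s₂ • (M₁⁻¹ * M₁ * M₂⁻¹) - s₁ • (M₁⁻¹ * (M₂ * M₂⁻¹)) := by
        simp [Matrix.mul_sub, Matrix.sub_mul, Matrix.mul_smul, Matrix.smul_mul,
          Matrix.mul_assoc]
    _ = s₂ • M₂⁻¹ - s₁ • M₁⁻¹ := by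
        rw [Matrix.nonsing_inv_mul _ h₁, Matrix.mul_nonsing_inv _ h₂]
        simp

/-- The entries of the data matrix `𝕄 = L̃* A V_r` are scaled shifted
divided differences of the transfer function `H(s) = C (sE − A)⁻¹ B`:
`𝕄_{i,j} = −φ_i (iω_i H(iω_i) − η_j H(η_j)) / (iω_i − η_j)`. -/
theorem stmt3 (n N r : ℕ)
    (A E : Matrix (Fin n) (Fin n) ℂ) (B : Matrix (Fin n) (Fin 1) ℂ)
    (C : Matrix (Fin 1) (Fin n) ℂ)
    (ω φ : Fin N → ℝ) (η : Fin r → ℂ)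
    (hω : ∀ i, IsUnit ((Complex.I * (ω i : ℂ)) • E - A).det)
    (hη : ∀ j, IsUnit (η j • E - A).det)
    (hne : ∀ i j, Complex.I * (ω i : ℂ) ≠ η j)
    (H : ℂ → ℂ) (hH : ∀ s, H s = (C * (s • E - A)⁻¹ * B) 0 0)
    (Lstar : Matrix (Fin N) (Fin n) ℂ)
    (hLstar : ∀ (k : Fin N) (x : Fin n), Lstar k x =
      (φ k : ℂ) * (C * ((Complex.I * (ω k : ℂ)) • E - A)⁻¹) 0 x)
    (V : Matrix (Fin n) (Fin r) ℂ)
    (hV : ∀ (x : Fin n) (j : Fin r), V x j = ((η j • E - A)⁻¹ * B) x 0)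
    (𝕄 : Matrix (Fin N) (Fin r) ℂ) (h𝕄 : 𝕄 = Lstar * A * V) :
    ∀ (i : Fin N) (j : Fin r),
      𝕄 i j = -(φ i : ℂ) * ((Complex.I * (ω i : ℂ) * H (Complex.I * (ω i : ℂ))
        - η j * H (η j)) / (Complex.I * (ω i : ℂ) - η j)) := by
  intro i j
  set s₁ : ℂ := Complex.I * (ω i : ℂ) with hs₁
  set s₂ : ℂ := η j with hs₂
  set M₁ := s₁ • E - A with hM₁
  set M₂ := s₂ • E - A with hM₂
  -- entry computation
  have hrow : ∀ y, (Lstar * A) i y = (φ i : ℂ) * (C * M₁⁻¹ * A) 0 y := by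
    intro y
    rw [Matrix.mul_apply, Matrix.mul_apply, Finset.mul_sum]
    refine Finset.sum_congr rfl fun x _ => ?_
    rw [hLstar]
    ring
  have hentry : 𝕄 i j = (φ i : ℂ) * (C * M₁⁻¹ * A * (M₂⁻¹ * B)) 0 0 := by
    rw [h𝕄]
    calc (Lstar * A * V) i j = ∑ x, (Lstar * A) i x * V x j := Matrix.mul_apply
      _ = ∑ x, (φ i : ℂ) * ((C * M₁⁻¹ * A) 0 x * (M₂⁻¹ * B) x 0) := by
          refine Finset.sum_congr rfl fun x _ => ?_
          rw [hrow, hV]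
          ring
      _ = (φ i : ℂ) * (C * M₁⁻¹ * A * (M₂⁻¹ * B)) 0 0 := by
          rw [Matrix.mul_apply, Finset.mul_sum]
  -- scalar identity from the matrix identity
  have hkey := key_resolvent A E s₁ s₂ (hω i) (hη j)
  have hscal : (s₁ - s₂) * (C * M₁⁻¹ * A * (M₂⁻¹ * B)) 0 0
      = s₂ * H s₂ - s₁ * H s₁ := by
    have h1 : C * ((s₁ - s₂) • (M₁⁻¹ * A * M₂⁻¹)) * B
        = C * (s₂ • M₂⁻¹ - s₁ • M₁⁻¹) * B := by rw [hkey]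
    have h2 : (s₁ - s₂) • (C * M₁⁻¹ * A * (M₂⁻¹ * B))
        = s₂ • (C * M₂⁻¹ * B) - s₁ • (C * M₁⁻¹ * B) := by
      simpa [Matrix.mul_sub, Matrix.sub_mul, Matrix.mul_smul, Matrix.smul_mul,
        Matrix.mul_assoc] using h1
    have h3 := congrFun (congrFun h2 0) 0
    simpa [hH, hM₁, hM₂] using h3
  have hne' : s₁ - s₂ ≠ 0 := sub_ne_zero.mpr (hne i j)
  have hX : (C * M₁⁻¹ * A * (M₂⁻¹ * B)) 0 0
      = (s₂ * H s₂ - s₁ * H s₁) / (s₁ - s₂) :=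
    eq_div_of_mul_eq hne' (by linear_combination hscal)
  rw [hentry, hX]
  ring
end

section
/- Let A, E ∈ ℂ^{n×n}, B ∈ ℂ^{n×1}, C ∈ ℂ^{1×n}, let ω_1, …, ω_N ∈ ℝ, φ_1, …, φ_N ∈ ℝ, and η_1, …, η_r ∈ ℂ be such that each iω_i E − A and each η_j E − A is invertible and iω_i ≠ η_j for all i, j. Let L̃* ∈ ℂ^{N×n} have k-th row φ_k C (iω_k E − A)^{-1}, let V_r ∈ ℂ^{n×r} have j-th column (η_j E − A)^{-1} B, and set W̃_r = (L̃*)^* L̃* E V_r. Define the reduced matrices Ã_r = W̃_r^* A V_r, Ẽ_r = W̃_r^* E V_r, B̃_r = W̃_r^* B, C̃_r = C V_r. Define scalars ℓ_{i,j} = −φ_i (H(iω_i) − H(η_j))/(iω_i − η_j) and m_{i,j} = −φ_i (iω_i H(iω_i) − η_j H(η_j))/(iω_i − η_j). Then for all 1 ≤ p, q ≤ r: (Ã_r)_{p,q} = Σ_{i=1}^{N} conj(ℓ_{i,p}) m_{i,q}, (Ẽ_r)_{p,q} = Σ_{i=1}^{N} conj(ℓ_{i,p}) ℓ_{i,q},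 (B̃_r)_p = Σ_{i=1}^{N} conj(ℓ_{i,p}) φ_i H(iω_i), and (C̃_r)_q = H(η_q); in particular every reduced matrix is determined solely by the transfer-function values H(iω_i), H(η_j) together with the nodes, shifts, and weights. -/
open Matrix

/-!
Both projection bases consist of resolvent vectors: the rows of `L̃*` are `φ_i C (iω_i E − A)⁻¹` and
the columns of `V_r` are `(η_j E − A)⁻¹ B`. By the second resolvent identity for the pencil,
`(t − s) (sE − A)⁻¹ E (tE − A)⁻¹ = (sE − A)⁻¹ − (tE − A)⁻¹`, so `L̃* E V_r = (ℓ_{i,j})` and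
`L̃* A V_r = (m_{i,j})` are divided differences of `H`, while `L̃* B = (φ_i H(iω_i))`. Since
`W̃_r^* = (L̃* E V_r)^* L̃*`, every reduced matrix is a product of these sampled matrices.
-/

namespace Matrix

variable {α : Type*} [Semiring α] {l l' m o o' : Type*} [Fintype m]

theorem mul_apply_of_row_eq_mul {L : Matrix l m α} {u : Matrix l' m α} {i : l} {i' : l'} {c : α}
    (h : ∀ x, L i x = c * u i' x) (M : Matrix m o α) (j : o) :
    (L * M) i j = c * (u * M) i' j := by
  simp only [mul_apply, h, Finset.mul_sum, mul_assoc]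

theorem mul_apply_of_col_eq {V : Matrix m o α} {w : Matrix m o' α} {j : o} {j' : o'}
    (h : ∀ x, V x j = w x j') (M : Matrix l m α) (i : l) :
    (M * V) i j = (M * w) i j' := by
  simp only [mul_apply, h]

end Matrix

section Pencil

variable {K : Type*} [Field K] {ι : Type*} [Fintype ι] [DecidableEq ι]
  (A E : Matrix ι ι K) (B : Matrix ι (Fin 1) K) (C : Matrix (Fin 1) ι K) {s t : K}

noncomputable def transferFn (z : K) : K := (C * (z • E - A)⁻¹ * B) 0 0

theorem pencil_resolvent_sub_resolvent (hs : IsUnit (s • E - A).det)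
    (ht : IsUnit (t • E - A).det) :
    (t - s) • ((s • E - A)⁻¹ * E * (t • E - A)⁻¹) = (s • E - A)⁻¹ - (t • E - A)⁻¹ := by
  have hst : IsUnit (s • E - A) ↔ IsUnit (t • E - A) := by
    simp only [isUnit_iff_isUnit_det, hs, ht]
  rw [inv_sub_inv hst, sub_sub_sub_cancel_right, ← sub_smul, Matrix.mul_smul, Matrix.smul_mul]

theorem pencil_resolvent_mul_A_mul_resolvent (hs : IsUnit (s • E - A).det)
    (ht : IsUnit (t • E - A).det) :
    (t - s) • ((s • E - A)⁻¹ * A * (t • E - A)⁻¹)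
      = s • (s • E - A)⁻¹ - t • (t • E - A)⁻¹ := by
  have hresA : (s • E - A)⁻¹ * A = s • ((s • E - A)⁻¹ * E) - 1 := by
    rw [← nonsing_inv_mul _ hs, ← Matrix.mul_smul, ← Matrix.mul_sub, sub_sub_cancel]
  rw [hresA, Matrix.sub_mul, Matrix.one_mul, Matrix.smul_mul, smul_sub, smul_comm (t - s) s,
    pencil_resolvent_sub_resolvent A E hs ht, smul_sub, sub_smul, sub_sub, add_sub_cancel]

theorem resolvent_E_resolvent_entry_eq_divided_difference (hs : IsUnit (s • E - A).det)
    (ht : IsUnit (t • E - A).det) (hst : s ≠ t) :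
    (C * (s • E - A)⁻¹ * E * ((t • E - A)⁻¹ * B)) 0 0
      = -((transferFn A E B C s - transferFn A E B C t) / (s - t)) := by
  have key := congr_arg (fun M => (C * M * B) 0 0) (pencil_resolvent_sub_resolvent A E hs ht)
  simp only [Matrix.mul_smul, Matrix.smul_mul, Matrix.mul_sub, Matrix.sub_mul, Matrix.smul_apply,
    Matrix.sub_apply, smul_eq_mul] at key
  rw [transferFn, transferFn, ← key, ← neg_sub t s, div_neg, neg_neg,
    mul_div_cancel_left₀ _ (sub_ne_zero.mpr hst.symm)]
  simp only [Matrix.mul_assoc]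

theorem resolvent_A_resolvent_entry_eq_divided_difference (hs : IsUnit (s • E - A).det)
    (ht : IsUnit (t • E - A).det) (hst : s ≠ t) :
    (C * (s • E - A)⁻¹ * A * ((t • E - A)⁻¹ * B)) 0 0
      = -((s * transferFn A E B C s - t * transferFn A E B C t) / (s - t)) := by
  have key := congr_arg (fun M => (C * M * B) 0 0)
    (pencil_resolvent_mul_A_mul_resolvent A E hs ht)
  simp only [Matrix.mul_smul, Matrix.smul_mul, Matrix.mul_sub, Matrix.sub_mul, Matrix.smul_apply,
    Matrix.sub_apply, smul_eq_mul] at key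
  rw [transferFn, transferFn, ← key, ← neg_sub t s, div_neg, neg_neg,
    mul_div_cancel_left₀ _ (sub_ne_zero.mpr hst.symm)]
  simp only [Matrix.mul_assoc]

end Pencil

/-- Every entry of the quadrature-ISRK reduced matrices
`Ã_r = W̃_r^* A V_r`, `Ẽ_r = W̃_r^* E V_r`, `B̃_r = W̃_r^* B`, `C̃_r = C V_r`
(with `W̃_r = (L̃*)^* L̃* E V_r`) is expressed solely through the scalar data
`ℓ_{i,j} = −φ_i (H(iω_i) − H(η_j))/(iω_i − η_j)` and
`m_{i,j} = −φ_i (iω_i H(iω_i) − η_j H(η_j))/(iω_i − η_j)` together with the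
transfer-function samples. -/
theorem stmt6 (n N r : ℕ)
    (A E : Matrix (Fin n) (Fin n) ℂ) (B : Matrix (Fin n) (Fin 1) ℂ)
    (C : Matrix (Fin 1) (Fin n) ℂ)
    (ω φ : Fin N → ℝ) (η : Fin r → ℂ)
    (hω : ∀ i, IsUnit ((Complex.I * (ω i : ℂ)) • E - A).det)
    (hη : ∀ j, IsUnit (η j • E - A).det)
    (hne : ∀ i j, Complex.I * (ω i : ℂ) ≠ η j)
    (H : ℂ → ℂ) (hH : ∀ s, H s = (C * (s • E - A)⁻¹ * B) 0 0)
    (Lstar : Matrix (Fin N) (Fin n) ℂ)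
    (hLstar : ∀ (k : Fin N) (x : Fin n), Lstar k x =
      (φ k : ℂ) * (C * ((Complex.I * (ω k : ℂ)) • E - A)⁻¹) 0 x)
    (V : Matrix (Fin n) (Fin r) ℂ)
    (hV : ∀ (x : Fin n) (j : Fin r), V x j = ((η j • E - A)⁻¹ * B) x 0)
    (W : Matrix (Fin n) (Fin r) ℂ) (hW : W = Lstarᴴ * Lstar * E * V)
    (Ar Er : Matrix (Fin r) (Fin r) ℂ)
    (Br : Matrix (Fin r) (Fin 1) ℂ) (Cr : Matrix (Fin 1) (Fin r) ℂ)
    (hAr : Ar = Wᴴ * A * V) (hEr : Er = Wᴴ * E * V)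
    (hBr : Br = Wᴴ * B) (hCr : Cr = C * V)
    (ℓ m : Fin N → Fin r → ℂ)
    (hℓ : ∀ i j, ℓ i j =
      -(φ i : ℂ) * ((H (Complex.I * (ω i : ℂ)) - H (η j)) / (Complex.I * (ω i : ℂ) - η j)))
    (hm : ∀ i j, m i j =
      -(φ i : ℂ) * ((Complex.I * (ω i : ℂ) * H (Complex.I * (ω i : ℂ)) - η j * H (η j)) /
        (Complex.I * (ω i : ℂ) - η j))) :
    ∀ p q : Fin r,
      Ar p q = ∑ i : Fin N, starRingEnd ℂ (ℓ i p) * m i q ∧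
      Er p q = ∑ i : Fin N, starRingEnd ℂ (ℓ i p) * ℓ i q ∧
      Br p 0 = ∑ i : Fin N, starRingEnd ℂ (ℓ i p) * ((φ i : ℂ) * H (Complex.I * (ω i : ℂ))) ∧
      Cr 0 q = H (η q) := by
  intro p q
  obtain rfl : H = transferFn A E B C := funext hH
  have hrow : ∀ i {k : Type} (M : Matrix (Fin n) k ℂ) j,
      (Lstar * M) i j = φ i * (C * ((Complex.I * ω i) • E - A)⁻¹ * M) 0 j :=
    fun i _ M j => mul_apply_of_row_eq_mul (hLstar i) M j
  have hcol : ∀ {k : Type} (M : Matrix k (Fin n) ℂ) i j,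
      (M * V) i j = (M * ((η j • E - A)⁻¹ * B)) i 0 :=
    fun M i j => mul_apply_of_col_eq (fun x => hV x j) M i
  have hLEV : ∀ i j, (Lstar * (E * V)) i j = ℓ i j := fun i j => by
    rw [hrow, ← Matrix.mul_assoc, hcol,
      resolvent_E_resolvent_entry_eq_divided_difference A E B C (hω i) (hη j) (hne i j), hℓ]
    ring
  have hLAV : ∀ i j, (Lstar * (A * V)) i j = m i j := fun i j => by
    rw [hrow, ← Matrix.mul_assoc, hcol,
      resolvent_A_resolvent_entry_eq_divided_difference A E B C (hω i) (hη j) (hne i j), hm]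
    ring
  have hLB : ∀ i, (Lstar * B) i 0 = φ i * transferFn A E B C (Complex.I * ω i) := fun i => by
    rw [hrow, transferFn]
  have hWM : ∀ {k : Type} (M : Matrix (Fin n) k ℂ),
      Wᴴ * M = (Lstar * (E * V))ᴴ * (Lstar * M) := fun M => by
    simp only [hW, conjTranspose_mul, conjTranspose_conjTranspose, Matrix.mul_assoc]
  refine ⟨?_, ?_, ?_, ?_⟩
  · rw [hAr, Matrix.mul_assoc, hWM, mul_apply]
    simp only [conjTranspose_apply, hLEV, hLAV, starRingEnd_apply]
  · rw [hEr, Matrix.mul_assoc, hWM, mul_apply]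
    simp only [conjTranspose_apply, hLEV, starRingEnd_apply]
  · rw [hBr, hWM, mul_apply]
    simp only [conjTranspose_apply, hLEV, hLB, starRingEnd_apply]
  · rw [hCr, hcol, ← Matrix.mul_assoc, transferFn]
end

section
/- Let A, E ∈ ℂ^{n×n}, B ∈ ℂ^{n×1}, C ∈ ℂ^{1×n}, let V, W ∈ ℂ^{n×r}, and let χ ∈ ℂ be such that χE − A is invertible. Define the reduced matrices A_r = W^* A V, E_r = W^* E V, B_r = W^* B, C_r = C V, and suppose χE_r − A_r is invertible. If there exists v ∈ ℂ^{r} with V v = (χE − A)^{-1} B (i.e., (χE − A)^{-1} B lies in the column span of V), then the reduced transfer function interpolates the full one at χ: C_r (χE_r − A_r)^{-1} B_r = C (χE − A)^{-1} B. -/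
open Matrix

/-- Petrov–Galerkin right-interpolation: if `(χE − A)⁻¹ B` lies in
the column span of `V`, then the reduced transfer function matches the full one
at `χ`. -/
theorem stmt12 (n r : ℕ)
    (A E : Matrix (Fin n) (Fin n) ℂ) (B : Matrix (Fin n) (Fin 1) ℂ)
    (C : Matrix (Fin 1) (Fin n) ℂ)
    (V W : Matrix (Fin n) (Fin r) ℂ) (χ : ℂ)
    (hχ : IsUnit (χ • E - A).det)
    (Ar Er : Matrix (Fin r) (Fin r) ℂ)
    (Br : Matrix (Fin r) (Fin 1) ℂ) (Cr : Matrix (Fin 1) (Fin r) ℂ)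
    (hAr : Ar = Wᴴ * A * V) (hEr : Er = Wᴴ * E * V)
    (hBr : Br = Wᴴ * B) (hCr : Cr = C * V)
    (hred : IsUnit (χ • Er - Ar).det)
    (hspan : ∃ v : Matrix (Fin r) (Fin 1) ℂ, V * v = (χ • E - A)⁻¹ * B) :
    Cr * (χ • Er - Ar)⁻¹ * Br = C * (χ • E - A)⁻¹ * B := by
  obtain ⟨v, hv⟩ := hspan
  have key : (χ • Er - Ar) * v = Br := by
    have h1 : χ • Er - Ar = Wᴴ * (χ • E - A) * V := by
      rw [hAr, hEr]
      simp [Matrix.mul_sub, Matrix.sub_mul, Matrix.mul_smul, Matrix.smul_mul, Matrix.mul_assoc]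
    rw [h1, hBr, Matrix.mul_assoc, Matrix.mul_assoc, hv, ← Matrix.mul_assoc (χ • E - A),
      Matrix.mul_nonsing_inv _ hχ, Matrix.one_mul]
  have hvi : (χ • Er - Ar)⁻¹ * Br = v := by
    rw [← key, ← Matrix.mul_assoc, Matrix.nonsing_inv_mul _ hred, Matrix.one_mul]
  rw [Matrix.mul_assoc, hvi, hCr, Matrix.mul_assoc, hv, Matrix.mul_assoc]
end

section
/- Let A, E ∈ ℂ^{n×n}, B ∈ ℂ^{n×1}, C ∈ ℂ^{1×n}, let V, W ∈ ℂ^{n×r}, and let ξ ∈ ℂ be such that ξE − A is invertible. Define the reduced matrices A_r = W^* A V, E_r = W^* E V, B_r = W^* B, C_r = C V, and suppose ξE_r − A_r is invertible. If there exists w ∈ ℂ^{r} with W w = ((ξE − A)^{-1})^* C^* (i.e., ((ξE − A)^{-*}) C^* lies in the column span of W), then the reduced transfer function interpolates the full one at ξ: C_r (ξE_r − A_r)^{-1} B_r = C (ξE − A)^{-1} B. -/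
open Matrix

/-- Petrov–Galerkin left-interpolation: if `((ξE − A)⁻¹)^* C^*`
lies in the column span of `W`, then the reduced transfer function matches the
full one at `ξ`. -/
theorem stmt13 (n r : ℕ)
    (A E : Matrix (Fin n) (Fin n) ℂ) (B : Matrix (Fin n) (Fin 1) ℂ)
    (C : Matrix (Fin 1) (Fin n) ℂ)
    (V W : Matrix (Fin n) (Fin r) ℂ) (ξ : ℂ)
    (hξ : IsUnit (ξ • E - A).det)
    (Ar Er : Matrix (Fin r) (Fin r) ℂ)
    (Br : Matrix (Fin r) (Fin 1) ℂ) (Cr : Matrix (Fin 1) (Fin r) ℂ)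
    (hAr : Ar = Wᴴ * A * V) (hEr : Er = Wᴴ * E * V)
    (hBr : Br = Wᴴ * B) (hCr : Cr = C * V)
    (hred : IsUnit (ξ • Er - Ar).det)
    (hspan : ∃ w : Matrix (Fin r) (Fin 1) ℂ, W * w = ((ξ • E - A)⁻¹)ᴴ * Cᴴ) :
    Cr * (ξ • Er - Ar)⁻¹ * Br = C * (ξ • E - A)⁻¹ * B := by
  obtain ⟨w, hw⟩ := hspan
  set K := ξ • E - A with hK
  have hwH : wᴴ * Wᴴ = C * K⁻¹ := by
    have := congrArg conjTranspose hw
    simpa [conjTranspose_mul, conjTranspose_nonsing_inv] using this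
  have hKr : ξ • Er - Ar = Wᴴ * K * V := by
    rw [hAr, hEr, hK]
    simp [Matrix.mul_sub, Matrix.sub_mul, Matrix.smul_mul, Matrix.mul_smul]
  have hCrw : wᴴ * (ξ • Er - Ar) = Cr := by
    rw [hKr, hCr, ← Matrix.mul_assoc, ← Matrix.mul_assoc, hwH]
    rw [Matrix.mul_assoc C K⁻¹ K, Matrix.nonsing_inv_mul K hξ, Matrix.mul_one]
  have h1 : Cr * (ξ • Er - Ar)⁻¹ = wᴴ := by
    rw [← hCrw, Matrix.mul_assoc, Matrix.mul_nonsing_inv _ hred, Matrix.mul_one]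
  rw [h1, hBr, ← Matrix.mul_assoc, hwH]
end

section
/- Let A, E ∈ ℂ^{n×n}, B ∈ ℂ^{n×1}, C ∈ ℂ^{1×n}, let Q ∈ ℂ^{n×n} be any matrix, let η_1, …, η_r ∈ ℂ be such that each η_j E − A is invertible, let V_r ∈ ℂ^{n×r} have j-th column (η_j E − A)^{-1} B, and set W_r = Q E V_r. Define A_r = W_r^* A V_r, E_r = W_r^* E V_r, B_r = W_r^* B, C_r = C V_r, and fix 1 ≤ j ≤ r with η_j E_r − A_r invertible. Then the ISRK reduced model interpolates the full transfer function at each shift: C_r (η_j E_r − A_r)^{-1} B_r = C (η_j E − A)^{-1} B. -/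
open Matrix

/-! With `M = η_j E - A`, the `j`-th column of `V` is `M⁻¹ B`, i.e. `V e_j = M⁻¹ B`. The reduced
pencil at `η_j` is the compression `Wᴴ M V`, so it maps `e_j` to `Wᴴ M M⁻¹ B = Wᴴ B = B_r`.
Hence `(η_j E_r - A_r)⁻¹ B_r = e_j` and `C_r e_j = C V e_j = C M⁻¹ B`. -/

namespace Matrix

variable {m k p q R : Type*}

theorem mul_single_eq_of_col_eq [Fintype k] [DecidableEq k] [NonAssocSemiring R] [Unique p]
    {V : Matrix m k R} {X : Matrix m p R} {j : k} (hV : ∀ x, V x j = X x default) :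
    V * single j default (1 : R) = X := by
  ext x b
  rw [Subsingleton.elim b default, mul_single_apply_same, mul_one, hV]

theorem smul_mul_mul_sub_mul_mul [Fintype m] [CommRing R] (W : Matrix k m R)
    (A E : Matrix m m R) (V : Matrix m k R) (s : R) :
    s • (W * E * V) - W * A * V = W * (s • E - A) * V := by
  rw [Matrix.mul_sub, Matrix.sub_mul, Matrix.mul_smul, Matrix.smul_mul]

theorem mul_compression_inv_mul_eq_of_mul_eq [Fintype m] [Fintype k] [DecidableEq m]
    [DecidableEq k] [CommRing R] (W : Matrix k m R) (M : Matrix m m R) (V : Matrix m k R)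
    (B : Matrix m p R) (C : Matrix q m R) (e : Matrix k p R) (hM : IsUnit M.det)
    (hred : IsUnit (W * M * V).det) (hVe : V * e = M⁻¹ * B) :
    C * V * (W * M * V)⁻¹ * (W * B) = C * M⁻¹ * B := by
  have hpencil : W * M * V * e = W * B := by
    rw [Matrix.mul_assoc, hVe, Matrix.mul_assoc, ← Matrix.mul_assoc M, mul_nonsing_inv M hM,
      Matrix.one_mul]
  have hsolve : (W * M * V)⁻¹ * (W * B) = e := by
    rw [← hpencil, ← Matrix.mul_assoc, nonsing_inv_mul _ hred, Matrix.one_mul]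
  rw [Matrix.mul_assoc, hsolve, Matrix.mul_assoc, hVe, Matrix.mul_assoc]

end Matrix

theorem stmt15_general (n r : ℕ)
    (A E : Matrix (Fin n) (Fin n) ℂ) (B : Matrix (Fin n) (Fin 1) ℂ)
    (C : Matrix (Fin 1) (Fin n) ℂ)
    (η : Fin r → ℂ) (hη : ∀ j, IsUnit (η j • E - A).det)
    (V : Matrix (Fin n) (Fin r) ℂ)
    (hV : ∀ (x : Fin n) (j : Fin r), V x j = ((η j • E - A)⁻¹ * B) x 0)
    (W : Matrix (Fin n) (Fin r) ℂ)
    (Ar Er : Matrix (Fin r) (Fin r) ℂ)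
    (Br : Matrix (Fin r) (Fin 1) ℂ) (Cr : Matrix (Fin 1) (Fin r) ℂ)
    (hAr : Ar = Wᴴ * A * V) (hEr : Er = Wᴴ * E * V)
    (hBr : Br = Wᴴ * B) (hCr : Cr = C * V)
    (j : Fin r) (hred : IsUnit (η j • Er - Ar).det) :
    Cr * (η j • Er - Ar)⁻¹ * Br = C * (η j • E - A)⁻¹ * B := by
  subst hAr hEr hBr hCr
  rw [smul_mul_mul_sub_mul_mul] at hred ⊢
  exact mul_compression_inv_mul_eq_of_mul_eq _ _ _ _ _ _ (hη j) hred
    (mul_single_eq_of_col_eq (hV · j))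

/-- ISRK interpolation property: with right basis `V_r` whose
`j`-th column is `(η_j E − A)⁻¹ B` and left basis `W_r = Q E V_r` for any `Q`,
the reduced transfer function matches the full one at each shift `η_j` (whenever
the reduced pencil is invertible there). -/
theorem stmt15 (n r : ℕ)
    (A E : Matrix (Fin n) (Fin n) ℂ) (B : Matrix (Fin n) (Fin 1) ℂ)
    (C : Matrix (Fin 1) (Fin n) ℂ) (Q : Matrix (Fin n) (Fin n) ℂ)
    (η : Fin r → ℂ) (hη : ∀ j, IsUnit (η j • E - A).det)
    (V : Matrix (Fin n) (Fin r) ℂ)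
    (hV : ∀ (x : Fin n) (j : Fin r), V x j = ((η j • E - A)⁻¹ * B) x 0)
    (W : Matrix (Fin n) (Fin r) ℂ) (hW : W = Q * E * V)
    (Ar Er : Matrix (Fin r) (Fin r) ℂ)
    (Br : Matrix (Fin r) (Fin 1) ℂ) (Cr : Matrix (Fin 1) (Fin r) ℂ)
    (hAr : Ar = Wᴴ * A * V) (hEr : Er = Wᴴ * E * V)
    (hBr : Br = Wᴴ * B) (hCr : Cr = C * V)
    (j : Fin r) (hred : IsUnit (η j • Er - Ar).det) :
    Cr * (η j • Er - Ar)⁻¹ * Br = C * (η j • E - A)⁻¹ * B :=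
  stmt15_general n r A E B C η hη V hV W Ar Er Br Cr hAr hEr hBr hCr j hred
end
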